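/- Let C ⊆ ℝⁿ be a compact semialgebraic convex set with 0 in its interior, and let C° = {ℓ ∈ ℝⁿ : ⟨ℓ, x⟩ ≥ −1 for all x ∈ C} be its polar. Let ℓ₀ be a regular real point of the algebraic boundary of C° lying on frontier C°, i.e. ℓ₀ ∈ frontier C° and there exists a polynomial p ∈ ℝ[x₁,…,xₙ] vanishing identically on frontier C° with ∇p(ℓ₀) ≠ 0. Then the face of C supported by ℓ₀ is a single point: the set {x ∈ C : ⟨ℓ₀, x⟩ = −1} is a singleton {x₀}, and x₀ is an extreme point of C (indeed an exposed point, exposed by ℓ₀). -/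

import Mathlib

open MvPolynomial

/-- A set is semialgebraic if it is a finite union of basic sets
`{x : p(x) = 0, q₁(x) > 0, …, q_m(x) > 0}`. -/
def IsSemialgebraic {n : ℕ} (S : Set (Fin n → ℝ)) : Prop :=
  ∃ (N : ℕ) (m : Fin N → ℕ)
    (p : Fin N → MvPolynomial (Fin n) ℝ)
    (q : (i : Fin N) → Fin (m i) → MvPolynomial (Fin n) ℝ),
    S = ⋃ i, {x | eval x (p i) = 0 ∧ ∀ j, 0 < eval x (q i j)}

/-- The vanishing ideal of a subset of ℝⁿ. -/
noncomputable def polyVanishingIdeal {n : ℕ} (T : Set (Fin n → ℝ)) : Ideal (MvPolynomial (Fin n) ℝ) where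
  carrier := {p | ∀ x ∈ T, eval x p = 0}
  add_mem' := by
    intro a b ha hb x hx
    simp [map_add, ha x hx, hb x hx]
  zero_mem' := by intro x hx; simp
  smul_mem' := by
    intro c p hp x hx
    simp [smul_eq_mul, hp x hx]

/-- The real zero set of an ideal of polynomials. -/
def realZeroSet {n : ℕ} (I : Ideal (MvPolynomial (Fin n) ℝ)) : Set (Fin n → ℝ) :=
  {x | ∀ p ∈ I, eval x p = 0}

/-- The gradient of a polynomial at a point. -/
noncomputable def grad {n : ℕ} (p : MvPolynomial (Fin n) ℝ) (z : Fin n → ℝ) : Fin n → ℝ :=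
  fun i => eval z (pderiv i p)

/-- The standard inner product on ℝⁿ. -/
def dot {n : ℕ} (a b : Fin n → ℝ) : ℝ := ∑ i, a i * b i

/-- The polar (dual convex body) of a set. -/
def polarBody {n : ℕ} (C : Set (Fin n → ℝ)) : Set (Fin n → ℝ) :=
  {ℓ | ∀ x ∈ C, -1 ≤ dot ℓ x}

/-- The dual cone of a set. -/
def dualCone {n : ℕ} (C : Set (Fin n → ℝ)) : Set (Fin n → ℝ) :=
  {ℓ | ∀ x ∈ C, 0 ≤ dot ℓ x}

/-- A pointed convex cone: convex, closed under nonnegative scaling, containing no line. -/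
def IsPointedCone {n : ℕ} (C : Set (Fin n → ℝ)) : Prop :=
  Convex ℝ C ∧ (∀ x ∈ C, ∀ t : ℝ, 0 ≤ t → t • x ∈ C) ∧ C ∩ (-C) = {0}

/-- A nonzero vector `v` spans an extreme ray of the cone `K` if whenever `y + z = v` with
`y, z ∈ K`, both `y` and `z` are nonnegative multiples of `v`. -/
def SpansExtremeRay {n : ℕ} (K : Set (Fin n → ℝ)) (v : Fin n → ℝ) : Prop :=
  v ≠ 0 ∧ v ∈ K ∧ ∀ y ∈ K, ∀ z ∈ K, y + z = v →
    (∃ t : ℝ, 0 ≤ t ∧ y = t • v) ∧ ∃ t : ℝ, 0 ≤ t ∧ z = t • v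

/-- The span of the gradients at `z` of the polynomials in `P`. -/
noncomputable def gradSpan {n : ℕ} (P : Ideal (MvPolynomial (Fin n) ℝ)) (z : Fin n → ℝ) :
    Submodule ℝ (Fin n → ℝ) :=
  Submodule.span ℝ {v | ∃ p ∈ P, v = grad p z}

/-!
For `x` in the face, `ℓ ↦ ⟨ℓ, x⟩` attains its minimum `-1` over the polar `D` at `l₀`, so it
is a functional supporting `D` at `l₀`. At a frontier point near which `∂D` lies in the zero set
of a function `P` with derivative `φ ≠ 0`, every supporting functional is a multiple of `φ`.
Otherwise some direction `w` leaves `D` while `φ w` has the sign of `φ e` for an inward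
direction `e`; sliding from `l₀ + t • w` along `e` into `D` crosses `∂D` at points `l₀ + h`
with `h → 0` and `|φ h| ≥ c ‖h‖`, which is incompatible with `P (l₀ + h) = φ h + o(‖h‖) = 0`.
So the face lies on the line `ℝ ∇p(l₀)`, on which `⟨l₀, ·⟩ = -1` has at most one solution;
the face is nonempty because otherwise compactness of `C` would put `l₀` in the interior of `D`,
and its point is exposed by `l₀`.
-/

open Set Filter Topology

section Dot

variable {n : ℕ}

lemma dot_eq_dotProduct (a b : Fin n → ℝ) : dot a b = a ⬝ᵥ b := rfl

lemma dot_comm (a b : Fin n → ℝ) : dot a b = dot b a := dotProduct_comm a b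

lemma continuous_dot : Continuous fun q : (Fin n → ℝ) × (Fin n → ℝ) => dot q.1 q.2 :=
  continuous_fst.dotProduct continuous_snd

def dotCLM (a : Fin n → ℝ) : (Fin n → ℝ) →L[ℝ] ℝ := ∑ i, a i • ContinuousLinearMap.proj i

@[simp]
lemma dotCLM_apply (a v : Fin n → ℝ) : dotCLM a v = dot a v := by
  simp [dotCLM, dot]

lemma dotCLM_smul (c : ℝ) (a : Fin n → ℝ) : dotCLM (c • a) = c • dotCLM a := by
  ext v
  simp [dot_eq_dotProduct, smul_dotProduct]

lemma dotCLM_injective : Function.Injective (dotCLM (n := n)) := by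
  intro a b h
  ext i
  simpa [dot_eq_dotProduct] using congr($h (Pi.single i 1))

lemma hasFDerivAt_eval (p : MvPolynomial (Fin n) ℝ) (z : Fin n → ℝ) :
    HasFDerivAt (fun x => eval x p) (dotCLM (grad p z)) z := by
  induction p using MvPolynomial.induction_on with
  | C a => simpa [grad, dotCLM] using hasFDerivAt_const (𝕜 := ℝ) a z
  | add p q hp hq =>
    simp only [map_add]
    refine (hp.add hq).congr_fderiv ?_
    ext v
    simp [grad, dot, add_mul, Finset.sum_add_distrib]
  | mul_X p j hp =>
    simp only [map_mul, eval_X]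
    refine (hp.mul (hasFDerivAt_apply j z)).congr_fderiv ?_
    ext v
    simp [grad, dot, pderiv_X, Pi.single_apply, apply_ite, ite_mul, add_mul,
      Finset.sum_add_distrib, Finset.mul_sum, mul_assoc]

end Dot

theorem IsPreconnected.inter_frontier_nonempty {X : Type*} [TopologicalSpace X] {s t : Set X}
    (hs : IsPreconnected s) (hst : (s ∩ t).Nonempty) (hs't : (s \ t).Nonempty) :
    (s ∩ frontier t).Nonempty := by
  by_contra h
  have hsplit : s ⊆ interior t ∪ (closure t)ᶜ := fun y hy => by
    by_cases hyi : y ∈ interior t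
    · exact Or.inl hyi
    · exact Or.inr fun hyc => h ⟨y, hy, hyc, hyi⟩
  have hint : (s ∩ interior t).Nonempty := hst.mono fun y hy =>
    ⟨hy.1, (hsplit hy.1).resolve_right (not_not.2 (subset_closure hy.2))⟩
  have hext : (s ∩ (closure t)ᶜ).Nonempty := hs't.mono fun y hy =>
    ⟨hy.1, (hsplit hy.1).resolve_left fun hyi => hy.2 (interior_subset hyi)⟩
  obtain ⟨y, -, hyi, hyc⟩ :=
    hs _ _ isOpen_interior isClosed_closure.isOpen_compl hsplit hint hext
  exact hyc (interior_subset_closure hyi)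

section SupportingFunctional

variable {E : Type*} [NormedAddCommGroup E] [NormedSpace ℝ E] {D : Set E} {l₀ e w : E}
  {x φ : E →L[ℝ] ℝ} {P : E → ℝ}

theorem HasFDerivAt.eventually_apply_add_ne_zero (hP : HasFDerivAt P φ l₀) (hP₀ : P l₀ = 0)
    {a : ℝ} (ha : 0 < a) :
    ∀ᶠ h in 𝓝 0, h ≠ 0 → a * ‖h‖ ≤ |φ h| → P (l₀ + h) ≠ 0 := by
  filter_upwards [(hasFDerivAt_iff_isLittleO_nhds_zero.1 hP).def (half_pos ha)]
    with h hle hne hcone hzero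
  simp only [hzero, hP₀, sub_zero, zero_sub, norm_neg, Real.norm_eq_abs] at hle
  have : ‖h‖ ≤ 0 := by nlinarith
  exact hne (norm_le_zero_iff.1 this)

theorem Convex.exists_add_smul_mem_frontier (hD : Convex ℝ D) (hl₀ : l₀ ∈ closure D)
    (he : l₀ + e ∈ interior D) (hx : IsMinOn x D l₀) (hw : x w < 0) :
    ∃ s₀ > (0 : ℝ), ∃ t₁ > (0 : ℝ), ∀ t ∈ Ioc (0 : ℝ) t₁, ∃ s ∈ Icc 0 s₀,
      l₀ + t • (w + s • e) ∈ frontier D := by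
  obtain ⟨r, hr, hball⟩ := Metric.isOpen_iff.1 isOpen_interior _ he
  -- `l₀ + e + s₀⁻¹ • w` stays in the ball, and `l₀ + t • (w + s₀ • e)` lies on the segment
  -- from `l₀` to it.
  set s₀ := ‖w‖ / r + 1
  have hs₀ : 0 < s₀ := by positivity
  refine ⟨s₀, hs₀, s₀⁻¹, inv_pos.2 hs₀, fun t ht => ?_⟩
  have hinner : l₀ + e + s₀⁻¹ • w ∈ interior D := by
    apply hball
    rw [Metric.mem_ball, dist_eq_norm, add_sub_cancel_left, norm_smul, Real.norm_eq_abs,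
      abs_of_pos (inv_pos.2 hs₀), inv_mul_lt_iff₀ hs₀]
    simp only [s₀]
    rw [add_mul, div_mul_cancel₀ _ hr.ne', one_mul]
    linarith
  have hend : l₀ + t • (w + s₀ • e) ∈ D := by
    have hts : t * s₀ ∈ Ioc (0 : ℝ) 1 :=
      ⟨mul_pos ht.1 hs₀, (le_div_iff₀ hs₀).1 (by rw [one_div]; exact ht.2)⟩
    convert interior_subset (hD.add_smul_sub_mem_interior' hl₀ hinner hts) using 1
    match_scalars <;> field_simp; ring
  have hstart : l₀ + t • (w + (0 : ℝ) • e) ∉ D := fun hmem => by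
    have := isMinOn_iff.1 hx _ hmem
    simp only [zero_smul, add_zero, map_add, map_smul, smul_eq_mul] at this
    nlinarith [ht.1]
  obtain ⟨_, ⟨s, hs, rfl⟩, hfr⟩ := IsPreconnected.inter_frontier_nonempty
    (isPreconnected_Icc.image (fun s : ℝ => l₀ + t • (w + s • e)) (by fun_prop))
    ⟨_, mem_image_of_mem _ (right_mem_Icc.2 hs₀.le), hend⟩
    ⟨_, mem_image_of_mem _ (left_mem_Icc.2 hs₀.le), hstart⟩
  exact ⟨s, hs, hfr⟩

theorem Convex.mul_nonpos_of_isMinOn (hD : Convex ℝ D) (hl₀ : l₀ ∈ frontier D)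
    (he : l₀ + e ∈ interior D) (hP : HasFDerivAt P φ l₀) (hPD : ∀ ℓ ∈ frontier D, P ℓ = 0)
    (hx : IsMinOn x D l₀) (hw : x w < 0) : φ w * φ e ≤ 0 := by
  by_contra! hpos
  obtain ⟨s₀, hs₀, t₁, ht₁, hfr⟩ := hD.exists_add_smul_mem_frontier hl₀.1 he hx hw
  set K := ‖w‖ + s₀ * ‖e‖ + 1
  have hK : 0 < K := by have := norm_nonneg w; have := norm_nonneg e; nlinarith
  have hφw : 0 < |φ w| := abs_pos.2 fun h => by simp [h] at hpos
  obtain ⟨r, hr, hgood⟩ := Metric.eventually_nhds_iff.1 <|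
    hP.eventually_apply_add_ne_zero (hPD l₀ hl₀) (div_pos hφw hK)
  set t := min t₁ (r / K)
  have ht : 0 < t := lt_min ht₁ (div_pos hr hK)
  obtain ⟨s, hs, hmem⟩ := hfr t ⟨ht, min_le_left _ _⟩
  set h := t • (w + s • e)
  have hnorm : ‖h‖ < t * K := by
    have : ‖w + s • e‖ < K := by
      calc ‖w + s • e‖ ≤ ‖w‖ + s * ‖e‖ := by
            simpa [norm_smul, abs_of_nonneg hs.1] using norm_add_le w (s • e)
        _ < K := by nlinarith [hs.2, norm_nonneg e]
    rw [norm_smul, Real.norm_of_nonneg ht.le]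
    exact mul_lt_mul_of_pos_left this ht
  -- `φ w` and `φ e` have the same sign, so moving along `e` cannot decrease `|φ|`.
  have habs : t * |φ w| ≤ |φ h| := by
    have : |φ w| ≤ |φ w + s * φ e| :=
      sq_le_sq.1 (by nlinarith [mul_nonneg hs.1 hpos.le, sq_nonneg (s * φ e)])
    simp only [h, map_smul, map_add, smul_eq_mul, abs_mul, abs_of_pos ht]
    exact mul_le_mul_of_nonneg_left this ht.le
  refine hgood ?_ ?_ ?_ (hPD _ hmem)
  · rw [dist_zero_right]
    calc ‖h‖ < t * K := hnorm
      _ ≤ r / K * K := mul_le_mul_of_nonneg_right (min_le_right _ _) hK.le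
      _ = r := div_mul_cancel₀ r hK.ne'
  · intro h0
    rw [h0, map_zero, abs_zero] at habs
    nlinarith [mul_pos ht hφw]
  · calc |φ w| / K * ‖h‖ ≤ |φ w| / K * (t * K) := by gcongr
      _ = t * |φ w| := by field_simp
      _ ≤ |φ h| := habs

theorem ContinuousLinearMap.eq_smul_of_apply_eq_zero (he : φ e ≠ 0) (h : ∀ v, φ v = 0 → x v = 0) :
    x = (x e / φ e) • φ := by
  ext v
  have := h (v - (φ v / φ e) • e) (by simp [he])
  simp only [map_sub, map_smul, smul_eq_mul, sub_eq_zero] at this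
  simp only [smul_apply, smul_eq_mul, this]
  ring

theorem Convex.apply_nonneg_of_isMinOn (hD : Convex ℝ D) (hl₀ : l₀ ∈ frontier D)
    (he : l₀ + e ∈ interior D) (hφe : φ e ≠ 0) (hP : HasFDerivAt P φ l₀)
    (hPD : ∀ ℓ ∈ frontier D, P ℓ = 0) (hx : IsMinOn x D l₀) {v : E} (hv : φ v = 0) :
    0 ≤ x v := by
  by_contra! hxv
  set η := -x v / (|x e| + 1)
  have hη : 0 < η := div_pos (neg_pos.2 hxv) (by positivity)
  have hxw : x (v + η • e) < 0 := by
    have : η * |x e| < -x v := by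
      calc η * |x e| < η * (|x e| + 1) := by linarith
        _ = -x v := div_mul_cancel₀ _ (by positivity)
    simp only [map_add, map_smul, smul_eq_mul]
    nlinarith [le_abs_self (x e)]
  have := hD.mul_nonpos_of_isMinOn hl₀ he hP hPD hx hxw
  simp only [map_add, map_smul, smul_eq_mul, hv, zero_add] at this
  nlinarith [mul_pos hη (mul_self_pos.2 hφe)]

theorem Convex.exists_eq_smul_of_isMinOn (hD : Convex ℝ D) (hD' : (interior D).Nonempty)
    (hl₀ : l₀ ∈ frontier D) (hP : HasFDerivAt P φ l₀) (hφ : φ ≠ 0)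
    (hPD : ∀ ℓ ∈ frontier D, P ℓ = 0) (hx : IsMinOn x D l₀) : ∃ c : ℝ, x = c • φ := by
  obtain ⟨e, he, hφe⟩ : ∃ e, l₀ + e ∈ interior D ∧ φ e ≠ 0 := by
    by_contra! h
    have : φ '' interior D = {φ l₀} := (hD'.image φ).subset_singleton_iff.1 <| by
      rintro _ ⟨q, hq, rfl⟩
      simpa [sub_eq_zero] using h (q - l₀) (by simpa using hq)
    exact not_isOpen_singleton (φ l₀) (this ▸ φ.isOpenMap_of_ne_zero hφ _ isOpen_interior)
  have hker : ∀ v, φ v = 0 → x v = 0 := fun v hv => by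
    have := hD.apply_nonneg_of_isMinOn hl₀ he hφe hP hPD hx (v := -v) (by simp [hv])
    exact le_antisymm (by simpa using this) (hD.apply_nonneg_of_isMinOn hl₀ he hφe hP hPD hx hv)
  exact ⟨_, ContinuousLinearMap.eq_smul_of_apply_eq_zero hφe hker⟩

end SupportingFunctional

section Polar

variable {n : ℕ} {C : Set (Fin n → ℝ)} {l₀ : Fin n → ℝ}

lemma polarBody_eq_biInter (C : Set (Fin n → ℝ)) :
    polarBody C = ⋂ x ∈ C, {ℓ | -1 ≤ dotCLM x ℓ} := by
  ext ℓ
  simp [polarBody, dot_comm]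

lemma isClosed_polarBody (C : Set (Fin n → ℝ)) : IsClosed (polarBody C) := by
  rw [polarBody_eq_biInter]
  exact isClosed_biInter fun x _ => isClosed_le continuous_const (dotCLM x).continuous

lemma convex_polarBody (C : Set (Fin n → ℝ)) : Convex ℝ (polarBody C) := by
  rw [polarBody_eq_biInter]
  exact convex_iInter₂ fun x _ => convex_halfSpace_ge (dotCLM x).toLinearMap.isLinear (-1)

lemma mem_interior_polarBody (hC : IsCompact C) {ℓ : Fin n → ℝ} (h : ∀ x ∈ C, -1 < dot ℓ x) :
    ℓ ∈ interior (polarBody C) := by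
  rw [mem_interior_iff_mem_nhds]
  have : ∀ᶠ ℓ' in 𝓝 ℓ, ∀ x ∈ C, -1 < dot ℓ' x :=
    hC.eventually_forall_of_forall_eventually fun x hx =>
      (continuous_dot.tendsto (ℓ, x)).eventually (lt_mem_nhds (h x hx))
  exact this.mono fun ℓ' h' x hx => (h' x hx).le

lemma exists_mem_face (hC : IsCompact C) (hl₀ : l₀ ∈ frontier (polarBody C)) :
    ∃ x ∈ C, dot l₀ x = -1 := by
  by_contra! h
  have hl₀C : l₀ ∈ polarBody C := (isClosed_polarBody C).frontier_subset hl₀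
  exact hl₀.2 (mem_interior_polarBody hC fun x hx => (hl₀C x hx).lt_of_ne (h x hx).symm)

lemma exists_eq_smul_grad_of_mem_face (hC : IsCompact C) (hl₀ : l₀ ∈ frontier (polarBody C))
    {p : MvPolynomial (Fin n) ℝ} (hp : ∀ ℓ ∈ frontier (polarBody C), eval ℓ p = 0)
    (hg : grad p l₀ ≠ 0) {x : Fin n → ℝ} (hx : x ∈ C) (hx₁ : dot l₀ x = -1) :
    ∃ c : ℝ, x = c • grad p l₀ := by
  have hint : (interior (polarBody C)).Nonempty :=
    ⟨0, mem_interior_polarBody hC fun x _ => by simp [dot]⟩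
  have hmin : IsMinOn (dotCLM x) (polarBody C) l₀ := isMinOn_iff.2 fun ℓ hℓ => by
    simpa [dot_comm x, hx₁] using hℓ x hx
  have hφ : dotCLM (grad p l₀) ≠ 0 := by simpa [dotCLM] using dotCLM_injective.ne hg
  obtain ⟨c, hc⟩ := (convex_polarBody C).exists_eq_smul_of_isMinOn hint hl₀
    (hasFDerivAt_eval p l₀) hφ hp hmin
  exact ⟨c, dotCLM_injective (by rw [hc, dotCLM_smul])⟩

lemma eq_of_mem_face (hC : IsCompact C) (hl₀ : l₀ ∈ frontier (polarBody C))
    {p : MvPolynomial (Fin n) ℝ} (hp : ∀ ℓ ∈ frontier (polarBody C), eval ℓ p = 0)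
    (hg : grad p l₀ ≠ 0) {x y : Fin n → ℝ} (hx : x ∈ C) (hx₁ : dot l₀ x = -1) (hy : y ∈ C)
    (hy₁ : dot l₀ y = -1) : x = y := by
  obtain ⟨c, rfl⟩ := exists_eq_smul_grad_of_mem_face hC hl₀ hp hg hx hx₁
  obtain ⟨d, rfl⟩ := exists_eq_smul_grad_of_mem_face hC hl₀ hp hg hy hy₁
  rw [dot_eq_dotProduct, dotProduct_smul, smul_eq_mul] at hx₁ hy₁
  rw [mul_right_cancel₀ (right_ne_zero_of_mul_eq_one (by linarith : -c * _ = 1))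
    (hx₁.trans hy₁.symm)]

end Polar

theorem face_of_regular_point_is_exposed_extreme_point_general {n : ℕ} (C : Set (Fin n → ℝ))
    (hcomp : IsCompact C)
    (l0 : Fin n → ℝ) (hl0 : l0 ∈ frontier (polarBody C))
    (hreg : ∃ p : MvPolynomial (Fin n) ℝ,
      (∀ l ∈ frontier (polarBody C), MvPolynomial.eval l p = 0) ∧ grad p l0 ≠ 0) :
    ∃ x₀ : Fin n → ℝ, {x | x ∈ C ∧ dot l0 x = -1} = {x₀} ∧
      x₀ ∈ Set.extremePoints ℝ C := by
  obtain ⟨p, hp, hg⟩ := hreg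
  obtain ⟨x₀, hx₀, hx₀₁⟩ := exists_mem_face hcomp hl0
  have hface : ∀ x ∈ C, dot l0 x = -1 → x = x₀ := fun x hx hx₁ =>
    eq_of_mem_face hcomp hl0 hp hg hx hx₁ hx₀ hx₀₁
  have hl0C : l0 ∈ polarBody C := (isClosed_polarBody C).frontier_subset hl0
  refine ⟨x₀, eq_singleton_iff_unique_mem.2 ⟨⟨hx₀, hx₀₁⟩, fun x hx => hface x hx.1 hx.2⟩,
    exposedPoints_subset_extremePoints ⟨hx₀, -dotCLM l0, fun y hy => ?_⟩⟩
  simp only [neg_apply, dotCLM_apply, hx₀₁, neg_le_neg_iff]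
  exact ⟨hl0C y hy, fun hle => hface y hy (le_antisymm hle (hl0C y hy))⟩

/-- A regular real point of the algebraic boundary of the polar supports a
face of `C` which is a single (extreme, exposed) point. -/
theorem face_of_regular_point_is_exposed_extreme_point {n : ℕ} (C : Set (Fin n → ℝ))
    (hcomp : IsCompact C) (hsa : IsSemialgebraic C) (hconv : Convex ℝ C)
    (h0 : (0 : Fin n → ℝ) ∈ interior C)
    (l0 : Fin n → ℝ) (hl0 : l0 ∈ frontier (polarBody C))
    (hreg : ∃ p : MvPolynomial (Fin n) ℝ,
      (∀ l ∈ frontier (polarBody C), MvPolynomial.eval l p = 0) ∧ grad p l0 ≠ 0) :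
    ∃ x₀ : Fin n → ℝ, {x | x ∈ C ∧ dot l0 x = -1} = {x₀} ∧
      x₀ ∈ Set.extremePoints ℝ C :=
  face_of_regular_point_is_exposed_extreme_point_general C hcomp l0 hl0 hreg
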